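/- arXiv:2512.24912 — 6 statements merged into one kernel-verified Lean document; each statement's English description precedes it below -/
import Mathlib

section
/- Let Ψ : sl_n(ℂ) → sl_n(ℂ) be a bijective linear map and D₁, D₂ ∈ sl_n(ℂ) fixed matrices such that [Ψ(A₁), Ψ(A₂)] = D₂ whenever [A₁, A₂] = D₁. If A₁, A₂ are fixed matrices with [A₁, A₂] = D₁, then for every matrix M₁ commuting with A₁ (with trace zero), we have [Ψ(A₁), Ψ(M₁)] = 0. -/
theorem stmt0 {n : ℕ}
    (Ψ : LinearMap.ker (Matrix.traceLinearMap (Fin n) ℂ ℂ) →ₗ[ℂ]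
         LinearMap.ker (Matrix.traceLinearMap (Fin n) ℂ ℂ))
    (hbij : Function.Bijective Ψ)
    (D₁ D₂ : LinearMap.ker (Matrix.traceLinearMap (Fin n) ℂ ℂ))
    (hpres : ∀ X Y : LinearMap.ker (Matrix.traceLinearMap (Fin n) ℂ ℂ),
      (X : Matrix (Fin n) (Fin n) ℂ) * Y - (Y : Matrix (Fin n) (Fin n) ℂ) * X = D₁ →
      (Ψ X : Matrix (Fin n) (Fin n) ℂ) * Ψ Y - (Ψ Y : Matrix (Fin n) (Fin n) ℂ) * Ψ X = D₂)
    (A₁ A₂ : LinearMap.ker (Matrix.traceLinearMap (Fin n) ℂ ℂ))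
    (hA : (A₁ : Matrix (Fin n) (Fin n) ℂ) * A₂ - (A₂ : Matrix (Fin n) (Fin n) ℂ) * A₁ = D₁) :
    ∀ M₁ : LinearMap.ker (Matrix.traceLinearMap (Fin n) ℂ ℂ),
      (A₁ : Matrix (Fin n) (Fin n) ℂ) * M₁ = (M₁ : Matrix (Fin n) (Fin n) ℂ) * A₁ →
      (Ψ A₁ : Matrix (Fin n) (Fin n) ℂ) * Ψ M₁ - (Ψ M₁ : Matrix (Fin n) (Fin n) ℂ) * Ψ A₁ = 0 := by
  intro M₁ hM
  have h1 := hpres A₁ A₂ hA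
  have h2 : ((A₁ : Matrix (Fin n) (Fin n) ℂ)) * ((A₂ + M₁ : LinearMap.ker (Matrix.traceLinearMap (Fin n) ℂ ℂ)) : Matrix (Fin n) (Fin n) ℂ)
      - ((A₂ + M₁ : LinearMap.ker (Matrix.traceLinearMap (Fin n) ℂ ℂ)) : Matrix (Fin n) (Fin n) ℂ) * A₁ = D₁ := by
    push_cast
    rw [mul_add, add_mul]
    rw [← hA, hM]
    abel
  have h3 := hpres A₁ (A₂ + M₁) h2
  rw [map_add Ψ] at h3
  push_cast at h3
  rw [mul_add, add_mul] at h3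
  have key : (Ψ A₁ : Matrix (Fin n) (Fin n) ℂ) * Ψ M₁ - (Ψ M₁ : Matrix (Fin n) (Fin n) ℂ) * Ψ A₁ =
      ((Ψ A₁ : Matrix (Fin n) (Fin n) ℂ) * Ψ A₂ + (Ψ A₁ : Matrix (Fin n) (Fin n) ℂ) * Ψ M₁
        - ((Ψ A₂ : Matrix (Fin n) (Fin n) ℂ) * Ψ A₁ + (Ψ M₁ : Matrix (Fin n) (Fin n) ℂ) * Ψ A₁))
      - ((Ψ A₁ : Matrix (Fin n) (Fin n) ℂ) * Ψ A₂ - (Ψ A₂ : Matrix (Fin n) (Fin n) ℂ) * Ψ A₁) := by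
    abel
  rw [key, h3, h1, sub_self]
end

section
/- Let Ψ : sl_n(ℂ) → sl_n(ℂ) be a bijective linear map and D₁, D₂ ∈ sl_n(ℂ) fixed matrices such that [Ψ(X), Ψ(Y)] = D₂ whenever [X, Y] = D₁. Suppose A₁, A₂ ∈ sl_n(ℂ) satisfy [A₁, A₂] = D₁. If S ∈ sl_n(ℂ) commutes with A₂, T ∈ sl_n(ℂ) commutes with A₁, and [S, T] = 0, then [Ψ(S), Ψ(T)] = 0. -/
theorem stmt1 {n : ℕ}
    (Ψ : LinearMap.ker (Matrix.traceLinearMap (Fin n) ℂ ℂ) →ₗ[ℂ]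
         LinearMap.ker (Matrix.traceLinearMap (Fin n) ℂ ℂ))
    (hbij : Function.Bijective Ψ)
    (D₁ D₂ : LinearMap.ker (Matrix.traceLinearMap (Fin n) ℂ ℂ))
    (hpres : ∀ X Y : LinearMap.ker (Matrix.traceLinearMap (Fin n) ℂ ℂ),
      (X : Matrix (Fin n) (Fin n) ℂ) * Y - (Y : Matrix (Fin n) (Fin n) ℂ) * X = D₁ →
      (Ψ X : Matrix (Fin n) (Fin n) ℂ) * Ψ Y - (Ψ Y : Matrix (Fin n) (Fin n) ℂ) * Ψ X = D₂)
    (A₁ A₂ : LinearMap.ker (Matrix.traceLinearMap (Fin n) ℂ ℂ))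
    (hA : (A₁ : Matrix (Fin n) (Fin n) ℂ) * A₂ - (A₂ : Matrix (Fin n) (Fin n) ℂ) * A₁ = D₁)
    (S T : LinearMap.ker (Matrix.traceLinearMap (Fin n) ℂ ℂ))
    (hS : (S : Matrix (Fin n) (Fin n) ℂ) * A₂ = (A₂ : Matrix (Fin n) (Fin n) ℂ) * S)
    (hT : (T : Matrix (Fin n) (Fin n) ℂ) * A₁ = (A₁ : Matrix (Fin n) (Fin n) ℂ) * T)
    (hST : (S : Matrix (Fin n) (Fin n) ℂ) * T - (T : Matrix (Fin n) (Fin n) ℂ) * S = 0) :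
    (Ψ S : Matrix (Fin n) (Fin n) ℂ) * Ψ T - (Ψ T : Matrix (Fin n) (Fin n) ℂ) * Ψ S = 0 := by
  have h0 := hpres A₁ A₂ hA
  have h1 := hpres (A₁ + S) A₂ (by
    push_cast
    rw [add_mul, mul_add, hS]
    rw [show ((A₁ : Matrix (Fin n) (Fin n) ℂ) * A₂ + (A₂ : Matrix (Fin n) (Fin n) ℂ) * S) -
      ((A₂ : Matrix (Fin n) (Fin n) ℂ) * A₁ + (A₂ : Matrix (Fin n) (Fin n) ℂ) * S) =
      (A₁ : Matrix (Fin n) (Fin n) ℂ) * A₂ - (A₂ : Matrix (Fin n) (Fin n) ℂ) * A₁ by abel]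
    exact hA)
  have h2 := hpres A₁ (A₂ + T) (by
    push_cast
    rw [add_mul, mul_add, ← hT]
    rw [show ((A₁ : Matrix (Fin n) (Fin n) ℂ) * A₂ + (T : Matrix (Fin n) (Fin n) ℂ) * A₁) -
      ((A₂ : Matrix (Fin n) (Fin n) ℂ) * A₁ + (T : Matrix (Fin n) (Fin n) ℂ) * A₁) =
      (A₁ : Matrix (Fin n) (Fin n) ℂ) * A₂ - (A₂ : Matrix (Fin n) (Fin n) ℂ) * A₁ by abel]
    exact hA)
  have h3 := hpres (A₁ + S) (A₂ + T) (by
    push_cast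
    have expand : ((A₁ : Matrix (Fin n) (Fin n) ℂ) + S) * ((A₂ : Matrix (Fin n) (Fin n) ℂ) + T) -
        ((A₂ : Matrix (Fin n) (Fin n) ℂ) + T) * ((A₁ : Matrix (Fin n) (Fin n) ℂ) + S) =
        ((A₁ : Matrix (Fin n) (Fin n) ℂ) * A₂ - (A₂ : Matrix (Fin n) (Fin n) ℂ) * A₁) +
        ((A₁ : Matrix (Fin n) (Fin n) ℂ) * T - (T : Matrix (Fin n) (Fin n) ℂ) * A₁) +
        ((S : Matrix (Fin n) (Fin n) ℂ) * A₂ - (A₂ : Matrix (Fin n) (Fin n) ℂ) * S) +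
        ((S : Matrix (Fin n) (Fin n) ℂ) * T - (T : Matrix (Fin n) (Fin n) ℂ) * S) := by
      noncomm_ring
    rw [expand, hA, hT, hS, sub_self, sub_self, hST, add_zero, add_zero, add_zero])
  simp only [map_add, Submodule.coe_add] at h1 h2 h3
  set a := (Ψ A₁ : Matrix (Fin n) (Fin n) ℂ)
  set b := (Ψ A₂ : Matrix (Fin n) (Fin n) ℂ)
  set s := (Ψ S : Matrix (Fin n) (Fin n) ℂ)
  set t := (Ψ T : Matrix (Fin n) (Fin n) ℂ)
  have e1 : s * b - b * s = 0 := by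
    have : s * b - b * s = ((a + s) * b - b * (a + s)) - (a * b - b * a) := by noncomm_ring
    rw [this, h1, h0, sub_self]
  have e2 : a * t - t * a = 0 := by
    have : a * t - t * a = (a * (b + t) - (b + t) * a) - (a * b - b * a) := by noncomm_ring
    rw [this, h2, h0, sub_self]
  have : s * t - t * s = ((a + s) * (b + t) - (b + t) * (a + s)) - (a * b - b * a)
      - (a * t - t * a) - (s * b - b * s) := by noncomm_ring
  rw [this, h3, h0, e1, e2, sub_self, sub_zero, sub_zero]
end

section
/- Let H₁, H₂ be complex Hilbert spaces and Ψ : B(H₁) → B(H₂) a linear map such that for all X, Y ∈ B(H₁) with 2X² − 2Y² = D₁ one has 2Ψ(X)² − 2Ψ(Y)² = D₂ (for fixed D₁, D₂). Fix a scalar c ∈ ℂ such that c·I − D₁/2 is a positive operator. Then for all P, Q ∈ B(H₁) with P² = Q² = c·I, one has Ψ(P)² = Ψ(Q)². -/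
set_option synthInstance.maxHeartbeats 1000000 in

theorem stmt3 {H₁ H₂ : Type*}
    [NormedAddCommGroup H₁] [InnerProductSpace ℂ H₁] [CompleteSpace H₁]
    [NormedAddCommGroup H₂] [InnerProductSpace ℂ H₂] [CompleteSpace H₂]
    (D₁ : H₁ →L[ℂ] H₁) (D₂ : H₂ →L[ℂ] H₂)
    (Ψ : (H₁ →L[ℂ] H₁) →ₗ[ℂ] (H₂ →L[ℂ] H₂))
    (hpres : ∀ X Y : H₁ →L[ℂ] H₁, 2 * (X * X) - 2 * (Y * Y) = D₁ →
      2 * (Ψ X * Ψ X) - 2 * (Ψ Y * Ψ Y) = D₂)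
    (c : ℂ)
    (hpos : (c • (1 : H₁ →L[ℂ] H₁) - (2 : ℂ)⁻¹ • D₁).IsPositive) :
    ∀ P Q : H₁ →L[ℂ] H₁, P * P = c • (1 : H₁ →L[ℂ] H₁) →
      Q * Q = c • (1 : H₁ →L[ℂ] H₁) → Ψ P * Ψ P = Ψ Q * Ψ Q := by
  intro P Q hP hQ
  set A : H₁ →L[ℂ] H₁ := c • (1 : H₁ →L[ℂ] H₁) - (2 : ℂ)⁻¹ • D₁ with hA
  have hA0 : (0 : H₁ →L[ℂ] H₁) ≤ A :=
    (ContinuousLinearMap.nonneg_iff_isPositive A).mpr hpos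
  set S := CFC.sqrt A with hS
  have hS2 : S * S = A := by
    have := CFC.sq_sqrt A hA0
    rwa [sq] at this
  have key : ∀ X : H₁ →L[ℂ] H₁, X * X = c • (1 : H₁ →L[ℂ] H₁) →
      2 * (X * X) - 2 * (S * S) = D₁ := by
    intro X hX
    rw [hX, hS2, hA]
    have h2 : ∀ Z : H₁ →L[ℂ] H₁, 2 * Z = (2 : ℂ) • Z := fun Z => by
      rw [two_mul, ← two_smul ℂ]
    rw [h2, h2, smul_sub, sub_sub_cancel, smul_smul]
    norm_num
  have h1 := hpres P S (key P hP)
  have h2 := hpres Q S (key Q hQ)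
  have h3 : 2 * (Ψ P * Ψ P) = 2 * (Ψ Q * Ψ Q) := by
    have h := h1.trans h2.symm
    have := sub_left_injective h
    exact this
  have h4 : (2 : ℂ) • (Ψ P * Ψ P) = (2 : ℂ) • (Ψ Q * Ψ Q) := by
    simpa [two_smul, two_mul] using h3
  have := smul_right_injective (H₂ →L[ℂ] H₂) (two_ne_zero (α := ℂ)) h4
  exact this
end

section
/- Let H₁, H₂ be complex Hilbert spaces and Ψ : B(H₁) → B(H₂) a linear map satisfying: for a fixed scalar c ∈ ℂ, Ψ(P)² = Ψ(Q)² whenever P² = Q² = c·I. Then Ψ preserves square-zero operators: if N ∈ B(H₁) satisfies N² = 0 and there exists M ∈ B(H₁) with N ∘ M = 0 and M² = c·I, then Ψ(N)² = 0. -/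
theorem stmt4 {H₁ H₂ : Type*}
    [NormedAddCommGroup H₁] [InnerProductSpace ℂ H₁] [CompleteSpace H₁]
    [NormedAddCommGroup H₂] [InnerProductSpace ℂ H₂] [CompleteSpace H₂]
    (Ψ : (H₁ →L[ℂ] H₁) →ₗ[ℂ] (H₂ →L[ℂ] H₂))
    (c : ℂ)
    (hsq : ∀ P Q : H₁ →L[ℂ] H₁, P * P = c • (1 : H₁ →L[ℂ] H₁) →
      Q * Q = c • (1 : H₁ →L[ℂ] H₁) → Ψ P * Ψ P = Ψ Q * Ψ Q) :
    ∀ N : H₁ →L[ℂ] H₁, N * N = 0 →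
      (∃ M : H₁ →L[ℂ] H₁, N * M + M * N = 0 ∧ M * M = c • (1 : H₁ →L[ℂ] H₁)) →
      Ψ N * Ψ N = 0 := by
  intro N hN ⟨M, hNM, hM⟩
  have h1 : (M + N) * (M + N) = c • (1 : H₁ →L[ℂ] H₁) := by
    have : (M + N) * (M + N) = M * M + (N * M + M * N) + N * N := by noncomm_ring
    rw [this, hNM, hN, hM]; abel
  have h2 : (M - N) * (M - N) = c • (1 : H₁ →L[ℂ] H₁) := by
    have : (M - N) * (M - N) = M * M - (N * M + M * N) + N * N := by noncomm_ring
    rw [this, hNM, hN, hM]; abel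
  have e1 := hsq (M + N) M h1 hM
  have e2 := hsq (M - N) M h2 hM
  rw [map_add] at e1
  rw [map_sub] at e2
  have key : (2 : ℂ) • (Ψ N * Ψ N) = 0 := by
    have : (Ψ M + Ψ N) * (Ψ M + Ψ N) + (Ψ M - Ψ N) * (Ψ M - Ψ N)
        - (Ψ M * Ψ M + Ψ M * Ψ M) = (2 : ℂ) • (Ψ N * Ψ N) := by
      simp [two_smul]; noncomm_ring
    rw [← this, e1, e2]; abel
  have := smul_eq_zero.mp key
  simpa using this
end

section
/- Let A be a unital (associative) ring in which 2 is invertible, and let Ψ : A → A be an additive map. If N, M ∈ A satisfy N² = 0, NM + MN = 0, M² = c·1 for some unit c, and Ψ satisfies Ψ(N+M)² = Ψ(N−M)² = Ψ(M)², then Ψ(N)² = 0. -/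
theorem stmt5 {A : Type*} [Ring A] (h2 : Invertible (2 : A))
    (Ψ : A →+ A) (N M c : A) (hc : IsUnit c)
    (hN : N * N = 0) (hNM : N * M + M * N = 0) (hM : M * M = c * 1)
    (h1 : Ψ (N + M) * Ψ (N + M) = Ψ M * Ψ M)
    (h2' : Ψ (N - M) * Ψ (N - M) = Ψ M * Ψ M) :
    Ψ N * Ψ N = 0 := by
  rw [map_add] at h1
  rw [map_sub] at h2'
  have key : (2 : A) * (Ψ N * Ψ N) = 0 := by
    have e : (2:A)*(Ψ N*Ψ N) =
        ((Ψ N+Ψ M)*(Ψ N+Ψ M) + (Ψ N-Ψ M)*(Ψ N-Ψ M)) - 2*(Ψ M*Ψ M) := by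
      noncomm_ring
    rw [e, h1, h2']
    noncomm_ring
  calc Ψ N * Ψ N = ⅟(2:A) * ((2:A) * (Ψ N * Ψ N)) := by
        rw [← mul_assoc, invOf_mul_self, one_mul]
    _ = 0 := by rw [key, mul_zero]
end

section
/- Let R be a unital ring with 2 invertible, L₁ ∈ R an idempotent, and Ψ : R → R an additive map with Ψ(1) = 2L₁ − 1. Suppose Ψ(L)·Ψ(1) + Ψ(1)·Ψ(L) = 2Ψ(L)² for every idempotent L ∈ R. Then for every idempotent L ∈ R, the element L₁ − Ψ(L) is idempotent: (L₁ − Ψ(L))² = L₁ − Ψ(L). -/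
theorem stmt13 {R : Type*} [Ring R] (h2 : Invertible (2 : R))
    (L₁ : R) (hL₁ : L₁ * L₁ = L₁)
    (Ψ : R →+ R) (h1 : Ψ 1 = 2 * L₁ - 1)
    (hid : ∀ L : R, L * L = L → Ψ L * Ψ 1 + Ψ 1 * Ψ L = 2 * (Ψ L * Ψ L)) :
    ∀ L : R, L * L = L → (L₁ - Ψ L) * (L₁ - Ψ L) = L₁ - Ψ L := by
  intro L hL
  have hx := hid L hL
  rw [h1] at hx
  have h4 : (2 : R) * ((L₁ - Ψ L) * (L₁ - Ψ L)) = 2 * (L₁ - Ψ L) := by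
    have e1 : (2 : R) * ((L₁ - Ψ L) * (L₁ - Ψ L)) - 2 * (L₁ - Ψ L)
        = (L₁ * L₁ - L₁) * 2
          + (2 * (Ψ L * Ψ L) - (Ψ L * (2 * L₁ - 1) + (2 * L₁ - 1) * Ψ L)) := by
      noncomm_ring
    rw [hL₁, hx] at e1
    simpa [sub_eq_zero] using e1
  calc (L₁ - Ψ L) * (L₁ - Ψ L)
      = ⅟(2 : R) * (2 * ((L₁ - Ψ L) * (L₁ - Ψ L))) := by
        rw [← mul_assoc, invOf_mul_self, one_mul]
    _ = ⅟(2 : R) * (2 * (L₁ - Ψ L)) := by rw [h4]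
    _ = L₁ - Ψ L := by rw [← mul_assoc, invOf_mul_self, one_mul]
end
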